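/- arXiv:math/0406287 — 3 statements merged into one kernel-verified Lean document; each statement's English description precedes it below -/
import Mathlib

section
/- Let a ∈ ℂ with a ≠ 0, and consider the entire curve f : ℂ → ℂ* × ℂ* given by f(z) = (exp(az), exp(z²)), regarded as a map into the product (ℂ ∪ {∞}) × (ℂ ∪ {∞}) of two Riemann spheres. Then the limit set f(∞) contains {0, ∞} × (ℂ ∪ {∞}); that is, for every point p of {0, ∞} × (ℂ ∪ {∞}) there exists a sequence (zₙ) in ℂ with |zₙ| → ∞ and f(zₙ) → p. -/
/-!
Choose `d` with `d² = ±i` and `Re (a d) > 0`, and look along the curves `z = d s + b` with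
`s → +∞` real and `b` bounded. Then `Re (a z) → +∞`, so `exp (a z) → ∞`, and replacing `z`
by `-z`, which does not change `z²`, gives `exp (a z) → 0`. Meanwhile
`z² = ±i s² + 2 d s b + b²`: the term `±i s²` only rotates `exp (z²)`, and even leaves it
unchanged when `s² ∈ 2πℕ`. The correction `b` steers `exp (z²)` to any prescribed point of the
sphere: a constant `b = ±1/(2d)` makes `Re (z²) = ±s + O(1)`, sending `exp (z²)` to `∞` or `0`,
and `b = log c / (2 d s)` with `s = √(2π(n+1))` gives `exp (z²) → c` for `c ≠ 0`.
-/

open Filter Complex Topology OnePoint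
open scoped Real

lemma exists_sq_eq_I_or_neg_I_and_re_mul_pos {a : ℂ} (ha : a ≠ 0) :
    ∃ d : ℂ, (d ^ 2 = I ∨ d ^ 2 = -I) ∧ 0 < (a * d).re := by
  obtain ⟨ω, hω⟩ := IsAlgClosed.exists_pow_nat_eq I two_pos
  have haω : a * ω ≠ 0 := mul_ne_zero ha (by rintro rfl; simp [eq_comm] at hω)
  have hIω : (I * ω) ^ 2 = -I := by rw [mul_pow, hω, I_sq, neg_one_mul]
  have hre_I : (a * (I * ω)).re = -(a * ω).im := by rw [mul_left_comm, I_mul_re]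
  rcases lt_trichotomy (a * ω).re 0 with hre | hre | hre
  · exact ⟨-ω, Or.inl (by rw [neg_sq, hω]), by simpa using hre⟩
  · have him : (a * ω).im ≠ 0 := fun him => haω (Complex.ext hre him)
    rcases him.lt_or_gt with him | him
    · exact ⟨I * ω, Or.inr hIω, by linarith⟩
    · exact ⟨-(I * ω), Or.inr (by rw [neg_sq, hIω]), by simpa [hre_I] using him⟩
  · exact ⟨ω, Or.inl hω, hre⟩

section

variable {α : Type*} {l : Filter α} {g : α → ℂ}

lemma tendsto_coe_exp_nhds_infty (h : Tendsto (fun x => (g x).re) l atTop) :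
    Tendsto (fun x => ((exp (g x) : ℂ) : OnePoint ℂ)) l (𝓝 ∞) := by
  have hexp := tendsto_exp_comap_re_atTop.comp (tendsto_comap_iff.2 h)
  rw [Metric.cobounded_eq_cocompact, ← coclosedCompact_eq_cocompact] at hexp
  exact tendsto_coe_infty.comp hexp

lemma tendsto_coe_exp_nhds_zero (h : Tendsto (fun x => (g x).re) l atBot) :
    Tendsto (fun x => ((exp (g x) : ℂ) : OnePoint ℂ)) l (𝓝 ((0 : ℂ) : OnePoint ℂ)) :=
  (continuous_coe.tendsto 0).comp (tendsto_exp_comap_re_atBot.comp (tendsto_comap_iff.2 h))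

lemma tendsto_norm_atTop_of_tendsto_re_mul {a : ℂ} (ha : a ≠ 0)
    (h : Tendsto (fun x => (a * g x).re) l atTop) : Tendsto (fun x => ‖g x‖) l atTop := by
  have hbound : ∀ x, (a * g x).re / ‖a‖ ≤ ‖g x‖ := fun x => by
    rw [div_le_iff₀ (norm_pos_iff.2 ha), mul_comm, ← norm_mul]
    exact re_le_norm _
  exact tendsto_atTop_mono hbound (h.atTop_div_const (norm_pos_iff.2 ha))

lemma tendsto_re_mul_mul_ofReal_add {a d b₀ : ℂ} (hd : 0 < (a * d).re) {s : α → ℝ}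
    (hs : Tendsto s l atTop) {b : α → ℂ} (hb : Tendsto b l (𝓝 b₀)) :
    Tendsto (fun x => (a * (d * s x + b x)).re) l atTop := by
  simp only [mul_add, add_re, ← mul_assoc, re_mul_ofReal]
  exact (hs.const_mul_atTop' hd).atTop_add
    (((continuous_re.comp (continuous_const_mul a)).tendsto b₀).comp hb)

end

lemma re_sq_mul_ofReal_add {d : ℂ} (hd : (d ^ 2).re = 0) (s : ℝ) (b : ℂ) :
    ((d * s + b) ^ 2).re = 2 * s * (d * b).re + (b ^ 2).re := by
  have hexpand :
      (d * s + b) ^ 2 = d ^ 2 * ((s ^ 2 : ℝ) : ℂ) + ((2 * s : ℝ) : ℂ) * (d * b) + b ^ 2 := by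
    push_cast; ring
  rw [hexpand, add_re, add_re, re_mul_ofReal, re_ofReal_mul, hd, zero_mul, zero_add]

lemma re_sq_mul_ofReal_add_mul_inv {d : ℂ} (hd : (d ^ 2).re = 0) (hd0 : d ≠ 0) (ε s : ℝ) :
    ((d * s + ε * (2 * d)⁻¹) ^ 2).re = ε * s + ((ε * (2 * d)⁻¹ : ℂ) ^ 2).re := by
  have hhalf : d * (ε * (2 * d)⁻¹) = ((ε / 2 : ℝ) : ℂ) := by push_cast; field_simp
  rw [re_sq_mul_ofReal_add hd, hhalf, ofReal_re]
  ring

lemma exp_mul_sqrt_two_pi_mul_sq {d : ℂ} (hd : d ^ 2 = I ∨ d ^ 2 = -I) (n : ℕ) :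
    exp (d ^ 2 * (√(2 * π * (n + 1)) : ℂ) ^ 2) = 1 := by
  have hsq : (√(2 * π * (n + 1)) : ℂ) ^ 2 = 2 * π * (n + 1) := by
    rw [← ofReal_pow, Real.sq_sqrt (by positivity)]; push_cast; ring
  rw [hsq]
  rcases hd with hd | hd
  · convert exp_int_mul_two_pi_mul_I (n + 1) using 2; rw [hd]; push_cast; ring
  · convert exp_int_mul_two_pi_mul_I (-(n + 1)) using 2; rw [hd]; push_cast; ring

lemma exists_tendsto_re_mul_atTop_tendsto_exp_sq_nhds {a d c : ℂ} (hd2 : d ^ 2 = I ∨ d ^ 2 = -I)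
    (hd : 0 < (a * d).re) (hc : c ≠ 0) :
    ∃ z : ℕ → ℂ, Tendsto (fun n => (a * z n).re) atTop atTop ∧
      Tendsto (fun n => exp (z n ^ 2)) atTop (𝓝 c) := by
  have hd0 : d ≠ 0 := by rintro rfl; rcases hd2 with h | h <;> simp [eq_comm] at h
  set s : ℕ → ℝ := fun n => √(2 * π * (n + 1))
  have hs0 : ∀ n, (s n : ℂ) ≠ 0 := fun n =>
    ofReal_ne_zero.2 (Real.sqrt_pos.2 (by positivity)).ne'
  have hs : Tendsto s atTop atTop :=
    Real.tendsto_sqrt_atTop.comp <|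
      (tendsto_atTop_add_const_right _ 1 tendsto_natCast_atTop_atTop).const_mul_atTop
        (by positivity)
  set b : ℕ → ℂ := fun n => log c * (2 * d)⁻¹ * (s n : ℂ)⁻¹
  have hb : Tendsto b atTop (𝓝 0) := by
    have h := (tendsto_inv_atTop_zero.comp hs).ofReal.const_mul (log c * (2 * d)⁻¹)
    simpa only [Function.comp_def, ofReal_inv, ofReal_zero, mul_zero] using h
  have hsq : ∀ n, exp ((d * s n + b n) ^ 2) = exp (log c + b n ^ 2) := fun n => by
    have hexpand : (d * s n + b n) ^ 2 = d ^ 2 * (s n : ℂ) ^ 2 + (log c + b n ^ 2) := by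
      simp only [b]; field_simp [hs0 n]; ring
    rw [hexpand, exp_add, exp_mul_sqrt_two_pi_mul_sq hd2, one_mul]
  refine ⟨fun n => d * s n + b n, tendsto_re_mul_mul_ofReal_add hd hs hb, ?_⟩
  have hlim := (continuous_exp.tendsto _).comp (tendsto_const_nhds (x := log c) |>.add (hb.pow 2))
  rw [zero_pow two_ne_zero, add_zero, exp_log hc] at hlim
  simpa only [hsq, Function.comp_def] using hlim

lemma exists_tendsto_re_mul_atTop_tendsto_exp_sq {a : ℂ} (ha : a ≠ 0) (q : OnePoint ℂ) :
    ∃ z : ℕ → ℂ, Tendsto (fun n => (a * z n).re) atTop atTop ∧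
      Tendsto (fun n => ((exp (z n ^ 2) : ℂ) : OnePoint ℂ)) atTop (𝓝 q) := by
  obtain ⟨d, hd2, hd⟩ := exists_sq_eq_I_or_neg_I_and_re_mul_pos ha
  have hd0 : d ≠ 0 := by rintro rfl; rcases hd2 with h | h <;> simp [eq_comm] at h
  have hdre : (d ^ 2).re = 0 := by rcases hd2 with h | h <;> simp [h]
  have hn : Tendsto (fun n : ℕ => (n : ℝ)) atTop atTop := tendsto_natCast_atTop_atTop
  induction q using OnePoint.rec with
  | infty =>
    refine ⟨fun n => d * (n : ℝ) + (1 : ℝ) * (2 * d)⁻¹,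
      tendsto_re_mul_mul_ofReal_add hd hn tendsto_const_nhds, tendsto_coe_exp_nhds_infty ?_⟩
    simp only [re_sq_mul_ofReal_add_mul_inv hdre hd0, one_mul]
    exact tendsto_atTop_add_const_right _ _ hn
  | coe c =>
    rcases eq_or_ne c 0 with rfl | hc
    · refine ⟨fun n => d * (n : ℝ) + (-1 : ℝ) * (2 * d)⁻¹,
        tendsto_re_mul_mul_ofReal_add hd hn tendsto_const_nhds, tendsto_coe_exp_nhds_zero ?_⟩
      simp only [re_sq_mul_ofReal_add_mul_inv hdre hd0, neg_one_mul]
      exact tendsto_atBot_add_const_right _ _ (tendsto_neg_atTop_atBot.comp hn)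
    · obtain ⟨z, hre, hexp⟩ := exists_tendsto_re_mul_atTop_tendsto_exp_sq_nhds hd2 hd hc
      exact ⟨z, hre, (continuous_coe.tendsto c).comp hexp⟩

/-- For `f : ℂ → (ℂ ∪ {∞}) × (ℂ ∪ {∞})`, `f z = (exp (a z), exp (z²))` with
`a ≠ 0`, the limit set `f(∞)` contains `{0, ∞} × (ℂ ∪ {∞})`: every point `p` with first
coordinate `0` or `∞` is the limit of `f (zₙ)` for some sequence `zₙ` with `|zₙ| → ∞`. -/
theorem limit_set_contains_fiber (a : ℂ) (ha : a ≠ 0)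
    (f : ℂ → OnePoint ℂ × OnePoint ℂ)
    (hf : ∀ z : ℂ, f z =
      (((Complex.exp (a * z) : ℂ) : OnePoint ℂ), ((Complex.exp (z ^ 2) : ℂ) : OnePoint ℂ))) :
    ∀ p : OnePoint ℂ × OnePoint ℂ,
      (p.1 = ((0 : ℂ) : OnePoint ℂ) ∨ p.1 = OnePoint.infty) →
      ∃ z : ℕ → ℂ,
        Tendsto (fun n => ‖z n‖) atTop atTop ∧
        Tendsto (fun n => f (z n)) atTop (nhds p) := by
  rintro ⟨p₁, p₂⟩ hp₁
  obtain ⟨z, hre, hsq⟩ := exists_tendsto_re_mul_atTop_tendsto_exp_sq ha p₂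
  have hnorm := tendsto_norm_atTop_of_tendsto_re_mul ha hre
  simp only [hf]
  rcases hp₁ with rfl | rfl
  · have hre_neg : Tendsto (fun n => (a * -z n).re) atTop atBot := by
      simpa only [mul_neg, neg_re, Function.comp_def] using tendsto_neg_atTop_atBot.comp hre
    exact ⟨-z, by simpa using hnorm,
      (tendsto_coe_exp_nhds_zero hre_neg).prodMk_nhds (by simpa using hsq)⟩
  · exact ⟨z, hnorm, (tendsto_coe_exp_nhds_infty hre).prodMk_nhds hsq⟩
end

section
/- Let a, c ∈ ℂ with a ≠ 0 and c ≠ 0. Then there exists a sequence (zₙ) in ℂ such that |zₙ| → ∞, exp(zₙ²) = c for every n, and |exp(a·zₙ)| → ∞. -/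
/-!
Choose `m = ±1` with `re (m * d) ≥ 0` for `d = 2πi a²`, and put `zₙ = √xₙ / a` with
`xₙ = a² log c + n m d`. Then `zₙ² = log c + 2πi m n`, so `exp (zₙ²) = c`, while
`re (a zₙ) = re √xₙ = √((‖xₙ‖ + re xₙ) / 2)` tends to infinity because `‖xₙ‖ → ∞` and
`re xₙ ≥ re (a² log c)`.
-/

open Filter Complex

theorem Complex.sq_sqrt (x : ℂ) : sqrt x ^ 2 = x :=
  cpow_ofNat_inv_pow x 2

theorem tendsto_norm_add_nsmul_atTop {E : Type*} [NormedAddCommGroup E] [NormedSpace ℝ E]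
    (b : E) {d : E} (hd : d ≠ 0) : Tendsto (fun n : ℕ => ‖b + n • d‖) atTop atTop := by
  have h_lin : Tendsto (fun n : ℕ => n * ‖d‖ - ‖b‖) atTop atTop :=
    tendsto_atTop_add_const_right _ _
      (tendsto_natCast_atTop_atTop.atTop_mul_const (norm_pos_iff.2 hd))
  refine tendsto_atTop_mono (fun n => ?_) h_lin
  have : ‖n • d‖ ≤ ‖b + n • d‖ + ‖b‖ := by
    simpa using norm_sub_le (b + n • d) b
  rw [RCLike.norm_nsmul ℝ, nsmul_eq_mul] at this
  linarith

theorem Complex.tendsto_re_sqrt_add_nat_mul_atTop (b : ℂ) {d : ℂ} (hd : d ≠ 0)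
    (hd_re : 0 ≤ d.re) : Tendsto (fun n : ℕ => (sqrt (b + n * d)).re) atTop atTop := by
  simp only [sqrt, cpow_inv_two_re]
  refine Real.tendsto_sqrt_atTop.comp (Tendsto.atTop_div_const two_pos ?_)
  refine tendsto_atTop_add_right_of_le _ b.re ?_ fun n => ?_
  · simpa only [nsmul_eq_mul] using tendsto_norm_add_nsmul_atTop b hd
  · simp only [add_re, mul_re, natCast_re, natCast_im, zero_mul, sub_zero]
    exact le_add_of_nonneg_right (mul_nonneg n.cast_nonneg hd_re)

/-- For `a c : ℂ` with `a ≠ 0`, `c ≠ 0`, there is a sequence `zₙ` with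
`|zₙ| → ∞`, `exp (zₙ²) = c` for all `n`, and `|exp (a zₙ)| → ∞`. -/
theorem exists_seq_exp_sq_eq_and_exp_mul_tendsto_infty (a c : ℂ) (ha : a ≠ 0) (hc : c ≠ 0) :
    ∃ z : ℕ → ℂ,
      Tendsto (fun n => ‖z n‖) atTop atTop ∧
      (∀ n, Complex.exp ((z n) ^ 2) = c) ∧
      Tendsto (fun n => ‖Complex.exp (a * z n)‖) atTop atTop := by
  set d : ℂ := a ^ 2 * (2 * Real.pi * I)
  obtain ⟨m, hm, hd_re⟩ : ∃ m : ℤ, m ≠ 0 ∧ 0 ≤ (m * d).re := by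
    rcases le_total 0 d.re with h | h
    exacts [⟨1, one_ne_zero, by simpa⟩, ⟨-1, by norm_num, by simpa⟩]
  have hmd : (m * d : ℂ) ≠ 0 := by simp [d, hm, ha, Real.pi_ne_zero]
  set u : ℕ → ℂ := fun n => sqrt (a ^ 2 * log c + n * (m * d))
  have hu_re : Tendsto (fun n => (u n).re) atTop atTop :=
    tendsto_re_sqrt_add_nat_mul_atTop _ hmd hd_re
  refine ⟨fun n => u n / a, ?_, fun n => ?_, ?_⟩
  · refine tendsto_atTop_mono (fun n => ?_) (hu_re.atTop_div_const (norm_pos_iff.2 ha))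
    rw [norm_div]
    exact div_le_div_of_nonneg_right (re_le_norm _) (norm_nonneg a)
  · have hsq : (u n / a) ^ 2 = log c + (m * n : ℤ) * (2 * Real.pi * I) := by
      simp only [u, d, div_pow, Complex.sq_sqrt]
      field_simp
      push_cast
      ring
    rw [hsq, exp_add, exp_log hc, exp_int_mul_two_pi_mul_I, mul_one]
  · simp only [mul_div_cancel₀ _ ha, norm_exp]
    exact Real.tendsto_exp_atTop.comp hu_re
end

section
/- Let a, c ∈ ℂ with a ≠ 0 and c ≠ 0. Then there exists a sequence (zₙ) in ℂ such that |zₙ| → ∞, exp(zₙ²) = c for every n, and exp(a·zₙ) → 0. -/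
/-!
Write `L = log c`. If `exp (ω ^ 2) = 1` and `Re (a ω) < 0` (such an `ω` is a multiple of `1 ± i`),
then `qₙ = (n + 1) ω` satisfies `exp (qₙ ^ 2) = 1` and `Re (a qₙ) → -∞`. Take for `zₙ` the square
root of `qₙ ^ 2 + L` on the side of `qₙ`: then `|zₙ + qₙ| ≥ |qₙ|`, so
`|zₙ - qₙ| = |L| / |zₙ + qₙ|` stays bounded, whence `exp (zₙ ^ 2) = c` and `Re (a zₙ) → -∞`.
-/

open Filter Complex ComplexConjugate

namespace Complex

theorem norm_le_norm_add_of_re_mul_conj_nonneg {z q : ℂ} (h : 0 ≤ (z * conj q).re) :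
    ‖q‖ ≤ ‖z + q‖ := by
  have hsq : normSq q ≤ normSq (z + q) := by
    rw [normSq_add]
    linarith [normSq_nonneg z]
  rw [← sq_le_sq₀ (norm_nonneg _) (norm_nonneg _), ← normSq_eq_norm_sq, ← normSq_eq_norm_sq]
  exact hsq

theorem exists_sq_eq_add_and_norm_sub_mul_le (q L : ℂ) :
    ∃ z : ℂ, z ^ 2 = q ^ 2 + L ∧ ‖z - q‖ * ‖q‖ ≤ ‖L‖ := by
  obtain ⟨w, hw⟩ := IsAlgClosed.exists_eq_mul_self (q ^ 2 + L)
  obtain ⟨z, hz_sq, hz_side⟩ : ∃ z : ℂ, z ^ 2 = q ^ 2 + L ∧ 0 ≤ (z * conj q).re := by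
    rcases le_or_gt 0 (w * conj q).re with h | h
    · exact ⟨w, by rw [hw, sq], h⟩
    · refine ⟨-w, by rw [hw, neg_sq, sq], ?_⟩
      rw [neg_mul, neg_re]
      exact (neg_pos.2 h).le
  refine ⟨z, hz_sq, ?_⟩
  calc ‖z - q‖ * ‖q‖ ≤ ‖z - q‖ * ‖z + q‖ :=
        mul_le_mul_of_nonneg_left (norm_le_norm_add_of_re_mul_conj_nonneg hz_side) (norm_nonneg _)
    _ = ‖L‖ := by
      rw [← norm_mul, show (z - q) * (z + q) = z ^ 2 - q ^ 2 by ring, hz_sq, add_sub_cancel_left]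

theorem exists_exp_sq_eq_one_and_re_mul_ne_zero {a : ℂ} (ha : a ≠ 0) :
    ∃ ω : ℂ, exp (ω ^ 2) = 1 ∧ (a * ω).re ≠ 0 := by
  have hsq : ∀ ε : ℤ, ε ^ 2 = 1 → ((Real.sqrt Real.pi : ℂ) * (1 + ε * I)) ^ 2 =
      ε * (2 * Real.pi * I) := by
    intro ε hε
    have hε' : (ε : ℂ) ^ 2 = 1 := by exact_mod_cast hε
    have hπ : (Real.sqrt Real.pi : ℂ) ^ 2 = Real.pi := by
      exact_mod_cast Real.sq_sqrt Real.pi_pos.le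
    linear_combination (1 + ε * I) ^ 2 * hπ + Real.pi * ε ^ 2 * I_sq - Real.pi * hε'
  have hre : ∀ ε : ℤ, (a * ((Real.sqrt Real.pi : ℂ) * (1 + ε * I))).re =
      Real.sqrt Real.pi * (a.re - ε * a.im) := by
    intro ε
    simp only [mul_re, mul_im, add_re, add_im, one_re, one_im, ofReal_re, ofReal_im, intCast_re,
      intCast_im, I_re, I_im]
    ring
  have hsqrt : Real.sqrt Real.pi ≠ 0 := (Real.sqrt_pos.2 Real.pi_pos).ne'
  obtain ⟨ε, hε, hne⟩ : ∃ ε : ℤ, ε ^ 2 = 1 ∧ a.re - ε * a.im ≠ 0 := by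
    by_contra! h
    have h₁ := h 1 (by norm_num)
    have h₂ := h (-1) (by norm_num)
    push_cast at h₁ h₂
    exact ha (Complex.ext (by rw [zero_re]; linarith) (by rw [zero_im]; linarith))
  refine ⟨_, ?_, (hre ε).trans_ne (mul_ne_zero hsqrt hne)⟩
  rw [hsq ε hε, exp_int_mul_two_pi_mul_I]

theorem exists_exp_sq_eq_one_and_re_mul_neg {a : ℂ} (ha : a ≠ 0) :
    ∃ ω : ℂ, exp (ω ^ 2) = 1 ∧ (a * ω).re < 0 := by
  obtain ⟨ω, hω, hne⟩ := exists_exp_sq_eq_one_and_re_mul_ne_zero ha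
  rcases hne.lt_or_gt with h | h
  · exact ⟨ω, hω, h⟩
  · refine ⟨-ω, by rwa [neg_sq], ?_⟩
    rw [mul_neg, neg_re]
    exact neg_neg_of_pos h

theorem tendsto_re_mul_atBot_of_norm_sub_le {α : Type*} {l : Filter α} {a : ℂ} {z q : α → ℂ}
    {B : ℝ} (hq : Tendsto (fun x => (a * q x).re) l atBot) (hB : ∀ x, ‖z x - q x‖ ≤ B) :
    Tendsto (fun x => (a * z x).re) l atBot := by
  have hsplit : ∀ x, (a * z x).re = (a * (z x - q x)).re + (a * q x).re := fun x => by
    rw [← add_re, ← mul_add, sub_add_cancel]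
  simp only [hsplit]
  refine tendsto_atBot_add_left_of_ge l (‖a‖ * B) (fun x => ?_) hq
  calc (a * (z x - q x)).re ≤ ‖a * (z x - q x)‖ := re_le_norm _
    _ ≤ ‖a‖ * B := by rw [norm_mul]; exact mul_le_mul_of_nonneg_left (hB x) (norm_nonneg a)

theorem tendsto_norm_atTop_of_tendsto_re_mul_atBot {α : Type*} {l : Filter α} {a : ℂ}
    {z : α → ℂ} (ha : a ≠ 0) (h : Tendsto (fun x => (a * z x).re) l atBot) :
    Tendsto (fun x => ‖z x‖) l atTop := by
  refine (tendsto_const_mul_atTop_of_pos (norm_pos_iff.2 ha)).1 ?_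
  refine tendsto_atTop_mono (fun x => ?_) (tendsto_neg_atBot_atTop.comp h)
  calc -(a * z x).re ≤ ‖a * z x‖ := (neg_le_abs _).trans (abs_re_le_norm _)
    _ = ‖a‖ * ‖z x‖ := norm_mul _ _

end Complex

/-- For `a c : ℂ` with `a ≠ 0`, `c ≠ 0`, there is a sequence `zₙ` with
`|zₙ| → ∞`, `exp (zₙ²) = c` for all `n`, and `exp (a zₙ) → 0`. -/
theorem exists_seq_exp_sq_eq_and_exp_mul_tendsto_zero (a c : ℂ) (ha : a ≠ 0) (hc : c ≠ 0) :
    ∃ z : ℕ → ℂ,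
      Tendsto (fun n => ‖z n‖) atTop atTop ∧
      (∀ n, Complex.exp ((z n) ^ 2) = c) ∧
      Tendsto (fun n => Complex.exp (a * z n)) atTop (nhds 0) := by
  obtain ⟨ω, hω_exp, hω_re⟩ := exists_exp_sq_eq_one_and_re_mul_neg ha
  have hω : 0 < ‖ω‖ := norm_pos_iff.2 (by rintro rfl; simp at hω_re)
  set q : ℕ → ℂ := fun n => ((n + 1 : ℕ) : ℂ) * ω
  choose z hz_sq hz_near using fun n => exists_sq_eq_add_and_norm_sub_mul_le (q n) (log c)
  have hq_exp (n : ℕ) : exp (q n ^ 2) = 1 := by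
    rw [mul_pow, ← Nat.cast_pow, exp_nat_mul, hω_exp, one_pow]
  have hq_re : Tendsto (fun n => (a * q n).re) atTop atBot := by
    have hlin (n : ℕ) : (a * q n).re = ((n + 1 : ℕ) : ℝ) * (a * ω).re := by
      rw [mul_left_comm, ← ofReal_natCast, re_ofReal_mul]
    simp only [hlin]
    exact (tendsto_natCast_atTop_atTop.comp (tendsto_add_atTop_nat 1)).atTop_mul_const_of_neg hω_re
  have hz_bound (n : ℕ) : ‖z n - q n‖ ≤ ‖log c‖ / ‖ω‖ := by
    rw [le_div_iff₀ hω]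
    refine le_trans (mul_le_mul_of_nonneg_left ?_ (norm_nonneg _)) (hz_near n)
    rw [norm_mul, Complex.norm_natCast]
    exact le_mul_of_one_le_left hω.le (by exact_mod_cast Nat.succ_pos n)
  have hz_re := tendsto_re_mul_atBot_of_norm_sub_le hq_re hz_bound
  refine ⟨z, tendsto_norm_atTop_of_tendsto_re_mul_atBot ha hz_re, fun n => ?_,
    tendsto_exp_nhds_zero_iff.2 hz_re⟩
  rw [hz_sq, exp_add, hq_exp, exp_log hc, one_mul]
end
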